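/- arXiv:2406.05710 — 3 statements merged into one kernel-verified Lean document; each statement's English description precedes it below -/
import Mathlib

section
/- Let ξ₁, …, ξ_m be exchangeable random elements in a measurable space that are almost surely pairwise distinct, and let ψ be a ranking function. Then ψ(ξ₁, …, ξ_m) is uniformly distributed on {1, …, m}. -/
/-!
Swapping the first coordinate with the `i`-th one does not change the law of `ξ`, so the events
`{ψ (ξ ∘ swap 0 i) = r}` all have the probability of `{ψ ξ = r}`. By (P2), for pairwise distinct
`ξ` the map `i ↦ ψ (ξ ∘ swap 0 i)` is injective, hence a permutation of `Fin m`; so these `m`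
events partition the sample space up to a null set and each has probability `1 / m`.
-/

open MeasureTheory ProbabilityTheory
open scoped ENNReal

theorem measure_apply_eq_inv_card_of_ae_bijective {Ω ι κ : Type*} [MeasurableSpace Ω]
    [Fintype ι] (μ : Measure Ω) [IsProbabilityMeasure μ]
    (f : Ω → ι → κ) (r : κ) (hmeas : ∀ i, NullMeasurableSet {ω | f ω i = r} μ)
    (hbij : ∀ᵐ ω ∂μ, Function.Bijective (f ω)) {c : ℝ≥0∞}
    (hc : ∀ i, μ {ω | f ω i = r} = c) : c = (Fintype.card ι : ℝ≥0∞)⁻¹ := by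
  set A : ι → Set Ω := fun i => {ω | f ω i = r}
  have hdisj : Pairwise (Function.onFun (AEDisjoint μ) A) := by
    intro i j hij
    refine measure_eq_zero_iff_ae_notMem.mpr (hbij.mono fun ω hω ⟨hi, hj⟩ => ?_)
    exact hij (hω.1 ((hi : f ω i = r).trans hj.symm))
  have hcover : μ (⋃ i, A i) = 1 := by
    rw [← measure_univ (μ := μ)]
    refine measure_congr (ae_eq_univ.mpr (measure_eq_zero_iff_ae_notMem.mpr ?_))
    filter_upwards [hbij] with ω hω hnot
    obtain ⟨i, hi⟩ := hω.2 r
    exact hnot (Set.mem_iUnion.mpr ⟨i, hi⟩)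
  rw [measure_iUnion₀ hdisj hmeas, tsum_fintype] at hcover
  simp only [A, hc, Finset.sum_const, Finset.card_univ, nsmul_eq_mul] at hcover
  exact ENNReal.eq_inv_of_mul_eq_one_left (by rwa [mul_comm])

theorem Function.bijective_comp_swap_of_injective {α ι : Type*} [Finite ι] [DecidableEq ι]
    {z : ι} {ψ : (ι → α) → ι}
    (hψ : ∀ (a : ι → α) (i j : ι), a i ≠ a j →
      ψ (a ∘ Equiv.swap z i) ≠ ψ (a ∘ Equiv.swap z j))
    {a : ι → α} (ha : Function.Injective a) :
    Function.Bijective fun i => ψ (a ∘ Equiv.swap z i) :=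
  Finite.injective_iff_bijective.mp fun i j hij =>
    by_contra fun hne => hψ a i j (ha.ne hne) hij

theorem stmt3_general {Ω 𝔸 : Type*} [MeasurableSpace Ω] [MeasurableSpace 𝔸]
    (P : Measure Ω) [IsProbabilityMeasure P] (m : ℕ) (hm : 0 < m)
    (ψ : (Fin m → 𝔸) → Fin m) (hψmeas : Measurable ψ)
    (hP2 : ∀ (a : Fin m → 𝔸) (i j : Fin m), a i ≠ a j →
      ψ (a ∘ Equiv.swap ⟨0, hm⟩ i) ≠ ψ (a ∘ Equiv.swap ⟨0, hm⟩ j))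
    (ξ : Ω → Fin m → 𝔸) (hξ : Measurable ξ)
    (hexch : ∀ σ : Equiv.Perm (Fin m),
      Measure.map (fun ω => ξ ω ∘ σ) P = Measure.map ξ P)
    (hdist : ∀ᵐ ω ∂P, ∀ i j : Fin m, i ≠ j → ξ ω i ≠ ξ ω j) :
    ∀ r : Fin m, P {ω | ψ (ξ ω) = r} = (m : ℝ≥0∞)⁻¹ := by
  intro r
  have hswap : ∀ σ : Equiv.Perm (Fin m), Measurable fun ω => ξ ω ∘ σ := fun σ =>
    measurable_pi_lambda _ fun j => (measurable_pi_apply _).comp hξ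
  have hlaw : ∀ i, P {ω | ψ (ξ ω ∘ Equiv.swap ⟨0, hm⟩ i) = r} = P {ω | ψ (ξ ω) = r} := by
    intro i
    have hS := hψmeas (measurableSet_singleton r)
    change P ((fun ω => ξ ω ∘ _) ⁻¹' (ψ ⁻¹' {r})) = P (ξ ⁻¹' (ψ ⁻¹' {r}))
    rw [← Measure.map_apply (hswap _) hS, hexch, Measure.map_apply hξ hS]
  simpa using measure_apply_eq_inv_card_of_ae_bijective P _ r
    (fun i => (hψmeas.comp (hswap _) (measurableSet_singleton r)).nullMeasurableSet)
    (hdist.mono fun ω hω => Function.bijective_comp_swap_of_injective hP2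
      fun i j hij => by_contra fun hne => hω i j hne hij) hlaw

/-- The rank of a.s. pairwise distinct exchangeable random elements, computed by a ranking
function, is uniformly distributed. -/
theorem stmt3 {Ω 𝔸 : Type*} [MeasurableSpace Ω] [MeasurableSpace 𝔸]
    (P : Measure Ω) [IsProbabilityMeasure P] (m : ℕ) (hm : 0 < m)
    (ψ : (Fin m → 𝔸) → Fin m) (hψmeas : Measurable ψ)
    (hP1 : ∀ (a : Fin m → 𝔸) (σ : Equiv.Perm (Fin m)), σ ⟨0, hm⟩ = ⟨0, hm⟩ →
      ψ (a ∘ σ) = ψ a)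
    (hP2 : ∀ (a : Fin m → 𝔸) (i j : Fin m), a i ≠ a j →
      ψ (a ∘ Equiv.swap ⟨0, hm⟩ i) ≠ ψ (a ∘ Equiv.swap ⟨0, hm⟩ j))
    (ξ : Ω → Fin m → 𝔸) (hξ : Measurable ξ)
    (hexch : ∀ σ : Equiv.Perm (Fin m),
      Measure.map (fun ω => ξ ω ∘ σ) P = Measure.map ξ P)
    (hdist : ∀ᵐ ω ∂P, ∀ i j : Fin m, i ≠ j → ξ ω i ≠ ξ ω j) :
    ∀ r : Fin m, P {ω | ψ (ξ ω) = r} = (m : ℝ≥0∞)⁻¹ :=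
  stmt3_general P m hm ψ hψmeas hP2 ξ hξ hexch hdist
end

section
/- Let X be a real random variable with mean μ and E[|X - μ|^{1+a}] ≤ M for some a ∈ (0,1]. Then for the empirical mean μ̄_n of n i.i.d. copies of X and any δ ∈ (0,1), P( μ̄_n ≤ μ + (3M/(δ n^a))^{1/(1+a)} ) ≥ 1 - δ. -/
/-!
For `1 < p ≤ 2` and `φ x = |x| ^ (p - 2) * x`, so that `p * φ` is the derivative of `|x| ^ p`,
comparing derivatives in `y` gives `|x + y| ^ p ≤ |x| ^ p + p * φ x * y + 2 * |y| ^ p`; the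
derivative inequality is `φ (x + y) - φ x ≤ 2 * φ y` for `y ≥ 0`, a consequence of the
subadditivity of `t ↦ t ^ (p - 1)`. With `x` a partial sum of independent centred variables and
`y` the next summand, the middle term has expectation zero, whence the von Bahr–Esseen bound
`E |∑ Yᵢ| ^ p ≤ 2 ∑ E |Yᵢ| ^ p`. Markov's inequality for `|∑ Yᵢ| ^ p` at the level
`(n t) ^ p = 3 n M / δ` then bounds the probability that the empirical mean exceeds `μ + t`
by `2 δ / 3 ≤ δ`.
-/

open MeasureTheory ProbabilityTheory
open scoped ENNReal

theorem abs_rpow_sub_two_mul_self_of_nonneg {p x : ℝ} (hp : p ≠ 1) (hx : 0 ≤ x) :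
    |x| ^ (p - 2) * x = x ^ (p - 1) := by
  rw [abs_of_nonneg hx, ← Real.rpow_add_one' hx (by contrapose! hp; linarith)]
  ring_nf

theorem abs_rpow_sub_two_mul_self_of_neg {p x : ℝ} (hx : x < 0) :
    |x| ^ (p - 2) * x = -(-x) ^ (p - 1) := by
  rw [abs_of_neg hx, ← neg_neg x, mul_neg, neg_neg, ← Real.rpow_add_one (by linarith)]
  ring_nf

theorem abs_abs_rpow_sub_two_mul_self {p : ℝ} (hp : p ≠ 1) (x : ℝ) :
    |(|x| ^ (p - 2) * x)| = |x| ^ (p - 1) := by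
  simpa [abs_mul, abs_of_nonneg (Real.rpow_nonneg (abs_nonneg x) _)] using
    abs_rpow_sub_two_mul_self_of_nonneg hp (abs_nonneg x)

theorem abs_rpow_sub_two_mul_add_le {p x y : ℝ} (hp1 : 1 < p) (hp2 : p ≤ 2) (hy : 0 ≤ y) :
    |x + y| ^ (p - 2) * (x + y) ≤ |x| ^ (p - 2) * x + 2 * (|y| ^ (p - 2) * y) := by
  have hq0 : 0 ≤ p - 1 := by linarith
  have hq1 : p - 1 ≤ 1 := by linarith
  rw [abs_rpow_sub_two_mul_self_of_nonneg hp1.ne' hy]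
  rcases le_or_gt 0 x with hx | hx
  · rw [abs_rpow_sub_two_mul_self_of_nonneg hp1.ne' hx,
      abs_rpow_sub_two_mul_self_of_nonneg hp1.ne' (by linarith)]
    linarith [Real.rpow_add_le_add_rpow hx hy hq0 hq1, Real.rpow_nonneg hy (p - 1)]
  rcases le_or_gt 0 (x + y) with hxy | hxy
  · rw [abs_rpow_sub_two_mul_self_of_neg hx, abs_rpow_sub_two_mul_self_of_nonneg hp1.ne' hxy]
    linarith [Real.rpow_le_rpow hxy (show x + y ≤ y by linarith) hq0,
      Real.rpow_le_rpow (neg_nonneg.2 hx.le) (show -x ≤ y by linarith) hq0]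
  · rw [abs_rpow_sub_two_mul_self_of_neg hx, abs_rpow_sub_two_mul_self_of_neg hxy]
    have := Real.rpow_add_le_add_rpow (neg_nonneg.2 hxy.le) hy hq0 hq1
    rw [show -(x + y) + y = -x by ring] at this
    linarith [Real.rpow_nonneg hy (p - 1)]

theorem abs_add_rpow_le_of_nonneg {p x y : ℝ} (hp1 : 1 < p) (hp2 : p ≤ 2) (hy : 0 ≤ y) :
    |x + y| ^ p ≤ |x| ^ p + p * (|x| ^ (p - 2) * x) * y + 2 * |y| ^ p := by
  set g : ℝ → ℝ := fun y => p * (|x| ^ (p - 2) * x) * y + 2 * |y| ^ p - |x + y| ^ p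
  have hg : ∀ y, HasDerivAt g (p * (|x| ^ (p - 2) * x) + 2 * (p * |y| ^ (p - 2) * y)
      - p * |x + y| ^ (p - 2) * (x + y)) y := fun y => by
    have := (((hasDerivAt_id y).const_mul (p * (|x| ^ (p - 2) * x))).add
      ((hasDerivAt_abs_rpow y hp1).const_mul 2)).sub
      ((hasDerivAt_abs_rpow (x + y) hp1).comp y ((hasDerivAt_id y).const_add x))
    exact this.congr_deriv (by ring)
  have hmono : MonotoneOn g (Set.Ici 0) := by
    refine monotoneOn_of_hasDerivWithinAt_nonneg (convex_Ici 0)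
      (fun y _ => (hg y).continuousAt.continuousWithinAt) (fun y _ => (hg y).hasDerivWithinAt)
      fun y hy => ?_
    rw [interior_Ici] at hy
    have := abs_rpow_sub_two_mul_add_le (x := x) hp1 hp2 (le_of_lt hy)
    nlinarith
  have := hmono Set.self_mem_Ici hy hy
  simp only [g, mul_zero, add_zero, abs_zero, Real.zero_rpow (by linarith : p ≠ 0)] at this
  linarith

theorem abs_add_rpow_le {p : ℝ} (hp1 : 1 < p) (hp2 : p ≤ 2) (x y : ℝ) :
    |x + y| ^ p ≤ |x| ^ p + p * (|x| ^ (p - 2) * x) * y + 2 * |y| ^ p := by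
  rcases le_or_gt 0 y with hy | hy
  · exact abs_add_rpow_le_of_nonneg hp1 hp2 hy
  · have := abs_add_rpow_le_of_nonneg (x := -x) hp1 hp2 (neg_nonneg.2 hy.le)
    rw [← neg_add, abs_neg, abs_neg, abs_neg] at this
    linarith

section

variable {Ω ι : Type*} [MeasurableSpace Ω] {P : Measure Ω}

theorem integrable_abs_finsetSum_rpow {p : ℝ} (hp : 0 < p) {Y : ι → Ω → ℝ}
    (hYm : ∀ i, Measurable (Y i)) (hYp : ∀ i, Integrable (fun ω => |Y i ω| ^ p) P)
    (s : Finset ι) : Integrable (fun ω => |∑ i ∈ s, Y i ω| ^ p) P := by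
  have hLp : ∀ i, MemLp (Y i) (ENNReal.ofReal p) P := fun i =>
    (integrable_norm_rpow_iff (hYm i).aestronglyMeasurable (by simpa using hp)
      ENNReal.ofReal_ne_top).1 (by simpa [ENNReal.toReal_ofReal hp.le] using hYp i)
  simpa [ENNReal.toReal_ofReal hp.le] using
    (integrable_norm_rpow_iff (Finset.measurable_sum s fun i _ => hYm i).aestronglyMeasurable
      (by simpa using hp) ENNReal.ofReal_ne_top).2 (memLp_finsetSum s fun i _ => hLp i)

theorem integral_abs_add_rpow_le [IsProbabilityMeasure P] {p : ℝ} (hp1 : 1 < p) (hp2 : p ≤ 2)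
    {X Y : Ω → ℝ} (hXm : Measurable X) (hYm : Measurable Y) (hXY : IndepFun X Y P)
    (hY : ∫ ω, Y ω ∂P = 0) (hXp : Integrable (fun ω => |X ω| ^ p) P)
    (hYp : Integrable (fun ω => |Y ω| ^ p) P) :
    ∫ ω, |X ω + Y ω| ^ p ∂P ≤ ∫ ω, |X ω| ^ p ∂P + 2 * ∫ ω, |Y ω| ^ p ∂P := by
  set Z : Ω → ℝ := fun ω => |X ω| ^ (p - 2) * X ω
  have hZm : Measurable Z := by fun_prop
  have hZY : IndepFun Z Y P := hXY.comp (φ := fun x => |x| ^ (p - 2) * x) (by fun_prop)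
    measurable_id
  have hZint : Integrable Z P := by
    refine Integrable.mono' (g := fun ω => |X ω| ^ (p - 1)) ?_ hZm.aestronglyMeasurable
      (ae_of_all _ fun ω => (abs_abs_rpow_sub_two_mul_self hp1.ne' (X ω)).le)
    simpa using integrable_norm_rpow_of_le hXm.aestronglyMeasurable
      (by linarith : 0 ≤ p - 1) (by linarith : 0 ≤ p) (by linarith) (by simpa using hXp)
  have hYint : Integrable Y P := (integrable_norm_iff hYm.aestronglyMeasurable).1 <| by
    simpa using integrable_norm_rpow_of_le hYm.aestronglyMeasurable zero_le_one
      (by linarith) hp1.le (by simpa using hYp)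
  have hZY_int : Integrable (fun ω => Z ω * Y ω) P := hZY.integrable_mul hZint hYint
  have hZY_zero : ∫ ω, Z ω * Y ω ∂P = 0 := by
    simpa [hY] using hZY.integral_mul_eq_mul_integral hZm.aestronglyMeasurable
      hYm.aestronglyMeasurable
  calc ∫ ω, |X ω + Y ω| ^ p ∂P
      ≤ ∫ ω, (|X ω| ^ p + p * (Z ω * Y ω) + 2 * |Y ω| ^ p) ∂P := by
        refine integral_mono_of_nonneg (ae_of_all _ fun ω => by positivity)
          ((hXp.add (hZY_int.const_mul p)).add (hYp.const_mul 2)) (ae_of_all _ fun ω => ?_)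
        exact (abs_add_rpow_le hp1 hp2 (X ω) (Y ω)).trans_eq (by rw [mul_assoc])
    _ = ∫ ω, |X ω| ^ p ∂P + p * ∫ ω, Z ω * Y ω ∂P + 2 * ∫ ω, |Y ω| ^ p ∂P := by
        rw [integral_add (f := fun ω => |X ω| ^ p + p * (Z ω * Y ω))
            (hXp.add (hZY_int.const_mul p)) (hYp.const_mul 2),
          integral_add (f := fun ω => |X ω| ^ p) hXp (hZY_int.const_mul p),
          integral_const_mul, integral_const_mul]
    _ = ∫ ω, |X ω| ^ p ∂P + 2 * ∫ ω, |Y ω| ^ p ∂P := by rw [hZY_zero, mul_zero, add_zero]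

theorem integral_abs_finsetSum_rpow_le [IsProbabilityMeasure P] {p : ℝ} (hp1 : 1 < p)
    (hp2 : p ≤ 2) {Y : ι → Ω → ℝ} (hYm : ∀ i, Measurable (Y i)) (hindep : iIndepFun Y P)
    (hmean : ∀ i, ∫ ω, Y i ω ∂P = 0) (hYp : ∀ i, Integrable (fun ω => |Y i ω| ^ p) P)
    (s : Finset ι) :
    ∫ ω, |∑ i ∈ s, Y i ω| ^ p ∂P ≤ 2 * ∑ i ∈ s, ∫ ω, |Y i ω| ^ p ∂P := by
  classical
  induction s using Finset.induction with
  | empty => simp [Real.zero_rpow (by linarith : p ≠ 0)]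
  | insert j s hj ih =>
    have hindep_j : IndepFun (fun ω => ∑ i ∈ s, Y i ω) (Y j) P := by
      simpa only [Finset.sum_fn] using hindep.indepFun_finsetSum_of_notMem hYm hj
    simp_rw [Finset.sum_insert hj, add_comm (Y j _)]
    calc ∫ ω, |∑ i ∈ s, Y i ω + Y j ω| ^ p ∂P
        ≤ ∫ ω, |∑ i ∈ s, Y i ω| ^ p ∂P + 2 * ∫ ω, |Y j ω| ^ p ∂P :=
          integral_abs_add_rpow_le hp1 hp2 (Finset.measurable_sum s fun i _ => hYm i) (hYm j)
            hindep_j (hmean j) (integrable_abs_finsetSum_rpow (by linarith) hYm hYp s) (hYp j)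
      _ ≤ 2 * (∫ ω, |Y j ω| ^ p ∂P + ∑ i ∈ s, ∫ ω, |Y i ω| ^ p ∂P) := by linarith

theorem measure_lt_le_ofReal_of_integral_le [IsFiniteMeasure P] {f : Ω → ℝ}
    (hf0 : 0 ≤ᵐ[P] f) (hf : Integrable f P) {ε η : ℝ} (hε : 0 ≤ ε)
    (h : ∫ ω, f ω ∂P ≤ ε * η) : P {ω | ε < f ω} ≤ ENNReal.ofReal η := by
  rcases hε.eq_or_lt with rfl | hε
  · have hf_zero : f =ᵐ[P] 0 := (integral_eq_zero_iff_of_nonneg_ae hf0 hf).1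
      (le_antisymm (by simpa using h) (integral_nonneg_of_ae hf0))
    calc P {ω | 0 < f ω} = 0 :=
          measure_mono_null (fun ω (hω : 0 < f ω) => hω.ne') (ae_iff.1 hf_zero)
      _ ≤ ENNReal.ofReal η := zero_le
  · have hmarkov := mul_meas_ge_le_integral_of_nonneg hf0 hf ε
    calc P {ω | ε < f ω} ≤ P {ω | ε ≤ f ω} := measure_mono fun ω (hω : ε < f ω) => hω.le
      _ = ENNReal.ofReal (P {ω | ε ≤ f ω}).toReal :=
          (ENNReal.ofReal_toReal (measure_ne_top _ _)).symm
      _ ≤ ENNReal.ofReal η :=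
          ENNReal.ofReal_le_ofReal (le_of_mul_le_mul_left (hmarkov.trans h) hε)

theorem measure_lt_finsetSum_le [IsProbabilityMeasure P] {p M c η : ℝ} (hp1 : 1 < p)
    (hp2 : p ≤ 2) {Y : ι → Ω → ℝ} (hYm : ∀ i, Measurable (Y i)) (hindep : iIndepFun Y P)
    (hmean : ∀ i, ∫ ω, Y i ω ∂P = 0) (hYp : ∀ i, Integrable (fun ω => |Y i ω| ^ p) P)
    (hmom : ∀ i, ∫ ω, |Y i ω| ^ p ∂P ≤ M) (s : Finset ι) (hc : 0 ≤ c)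
    (h : 2 * s.card * M ≤ c ^ p * η) :
    P {ω | c < ∑ i ∈ s, Y i ω} ≤ ENNReal.ofReal η := by
  refine (measure_mono fun ω (hω : c < ∑ i ∈ s, Y i ω) => ?_).trans
    (measure_lt_le_ofReal_of_integral_le (ε := c ^ p) (ae_of_all _ fun ω => by positivity)
      (integrable_abs_finsetSum_rpow (by linarith) hYm hYp s) (by positivity) ?_)
  · exact Real.rpow_lt_rpow hc (hω.trans_le (le_abs_self _)) (by linarith)
  · calc ∫ ω, |∑ i ∈ s, Y i ω| ^ p ∂P ≤ 2 * ∑ i ∈ s, ∫ ω, |Y i ω| ^ p ∂P :=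
          integral_abs_finsetSum_rpow_le hp1 hp2 hYm hindep hmean hYp s
      _ ≤ 2 * ∑ _i ∈ s, M := by gcongr with i; exact hmom i
      _ = 2 * s.card * M := by simp [mul_assoc]
      _ ≤ c ^ p * η := h

theorem ofReal_one_sub_le_measure [IsProbabilityMeasure P] {s : Set Ω} {δ : ℝ} (hδ : 0 ≤ δ)
    (h : P sᶜ ≤ ENNReal.ofReal δ) : ENNReal.ofReal (1 - δ) ≤ P s := by
  rw [ENNReal.ofReal_sub _ hδ, ENNReal.ofReal_one]
  calc 1 - ENNReal.ofReal δ ≤ 1 - P sᶜ := tsub_le_tsub_left h 1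
    _ ≤ P s := tsub_le_iff_right.2 (by simpa using measure_univ_le_add_compl s (μ := P))

end

theorem stmt5_general {Ω : Type*} [MeasurableSpace Ω] (P : Measure Ω) [IsProbabilityMeasure P]
    (n : ℕ) (hn : 0 < n) (a M δ μ : ℝ) (ha : a ∈ Set.Ioc (0:ℝ) 1)
    (hδ : δ ∈ Set.Ioo (0:ℝ) 1)
    (X : Fin n → Ω → ℝ) (hXm : ∀ i, Measurable (X i))
    (hXindep : iIndepFun X P)
    (hint : ∀ i, Integrable (X i) P)
    (hmean : ∀ i, ∫ ω, X i ω ∂P = μ)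
    (hmomint : ∀ i, Integrable (fun ω => |X i ω - μ| ^ (1 + a)) P)
    (hmom : ∀ i, ∫ ω, |X i ω - μ| ^ (1 + a) ∂P ≤ M) :
    ENNReal.ofReal (1 - δ)
      ≤ P {ω | (n : ℝ)⁻¹ * ∑ i, X i ω ≤ μ + (3 * M / (δ * (n : ℝ) ^ a)) ^ (1 / (1 + a))} := by
  obtain ⟨ha0, ha1⟩ := ha
  have hδ0 : 0 < δ := hδ.1
  have hnR : (0 : ℝ) < n := Nat.cast_pos.2 hn
  have hM : 0 ≤ M := (integral_nonneg fun _ => by positivity).trans (hmom ⟨0, hn⟩)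
  set t := (3 * M / (δ * (n : ℝ) ^ a)) ^ (1 / (1 + a))
  have ht : 0 ≤ t := by positivity
  have hnt : ((n : ℝ) * t) ^ (1 + a) = 3 * n * M / δ := by
    rw [Real.mul_rpow hnR.le ht, ← Real.rpow_mul (by positivity),
      one_div_mul_cancel (by linarith), Real.rpow_one, Real.rpow_one_add' hnR.le (by linarith)]
    field_simp
  set Y : Fin n → Ω → ℝ := fun i ω => X i ω - μ
  have htail : P {ω | (n : ℝ) * t < ∑ i, Y i ω} ≤ ENNReal.ofReal δ :=
    measure_lt_finsetSum_le (by linarith) (by linarith) (fun i => (hXm i).sub_const μ)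
      (hXindep.comp (fun _ x => x - μ) fun _ => measurable_id.sub_const μ)
      (fun i => by simp [integral_sub (hint i) (integrable_const μ), hmean i])
      hmomint hmom Finset.univ (by positivity)
      (by rw [hnt, div_mul_cancel₀ _ hδ0.ne', Finset.card_univ, Fintype.card_fin]; nlinarith)
  refine ofReal_one_sub_le_measure hδ0.le ((measure_mono fun ω hω => ?_).trans htail)
  have hlt : μ + t < (n : ℝ)⁻¹ * ∑ i, X i ω := not_le.1 hω
  rw [lt_inv_mul_iff₀ hnR] at hlt
  show (n : ℝ) * t < ∑ i, Y i ω
  simp only [Y, Finset.sum_sub_distrib, Finset.sum_const, Finset.card_univ,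
    Fintype.card_fin, nsmul_eq_mul]
  linarith

/-- Chebyshev-type one-sided bound for the empirical mean under a centered
`(1+a)`-moment bound. -/
theorem stmt5 {Ω : Type*} [MeasurableSpace Ω] (P : Measure Ω) [IsProbabilityMeasure P]
    (n : ℕ) (hn : 0 < n) (a M δ μ : ℝ) (ha : a ∈ Set.Ioc (0:ℝ) 1)
    (hδ : δ ∈ Set.Ioo (0:ℝ) 1)
    (X : Fin n → Ω → ℝ) (hXm : ∀ i, Measurable (X i))
    (hXindep : iIndepFun X P)
    (hXid : ∀ i j, Measure.map (X i) P = Measure.map (X j) P)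
    (hint : ∀ i, Integrable (X i) P)
    (hmean : ∀ i, ∫ ω, X i ω ∂P = μ)
    (hmomint : ∀ i, Integrable (fun ω => |X i ω - μ| ^ (1 + a)) P)
    (hmom : ∀ i, ∫ ω, |X i ω - μ| ^ (1 + a) ∂P ≤ M) :
    ENNReal.ofReal (1 - δ)
      ≤ P {ω | (n : ℝ)⁻¹ * ∑ i, X i ω ≤ μ + (3 * M / (δ * (n : ℝ) ^ a)) ^ (1 / (1 + a))} :=
  stmt5_general P n hn a M δ μ ha hδ X hXm hXindep hint hmean hmomint hmom
end

section
/- Under assumptions A1 (i.i.d. sample) and A2 (distribution symmetric about μ), the one-sided RMM test with parameters r, m (rational level p = r/m) satisfies P(R(μ) > m - r) = r/m, where R(μ) = 1 + ∑_{j=1}^{m-1} 1(S₀(μ) ≺_π S_j(μ)), the S_j are MoM statistics of the original and m-1 sign-randomized samples centered at μ, and ≺_π breaks ties with an independent uniform random permutation π. -/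
/-!
Put `Y i j = α i j * (X i - μ)`. The columns of `Y` are exchangeable: relabelling them by `σ`
and then multiplying each row `i` by the sign `α i (σ 0)` gives back a matrix of the same form,
because this operation maps the sign matrices with first column `1` bijectively onto themselves,
while the extra sign in front of `X i - μ` is invisible by the symmetry of its law. Hence the
column statistics, together with the independent uniform tie-breaking permutation, have a law
invariant under relabelling, and all the events "column `a` has rank `> m - r`" have the same
probability. With ties broken the ranks are a permutation of `1, …, m`, so every outcome lies in
exactly `r` of these `m` events, and each of them has probability `r / m`.
-/

open MeasureTheory ProbabilityTheory
open scoped ENNReal Classical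

/-- Empirical median of a list: the element of the sorted list at (0-based) index
`(length - 1) / 2`. -/
noncomputable def medList {α : Type*} [LinearOrder α] (d : α) (l : List α) : α :=
  (l.mergeSort (fun x y => decide (x ≤ y))).getD ((l.length - 1) / 2) d

instance permMeasurableSpace (m : ℕ) : MeasurableSpace (Equiv.Perm (Fin m)) := ⊤

instance (m : ℕ) : DiscreteMeasurableSpace (Equiv.Perm (Fin m)) :=
  ⟨fun _ => MeasurableSpace.measurableSet_top⟩

section Median

theorem List.Pairwise.getD_le_iff_lt_countP {α : Type*} [LinearOrder α] {l : List α}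
    (hl : l.Pairwise (· ≤ ·)) {i : ℕ} (hi : i < l.length) (c d : α) :
    l.getD i d ≤ c ↔ i < l.countP (· ≤ c) := by
  induction l generalizing i with
  | nil => simp at hi
  | cons a t ih =>
    rcases List.pairwise_cons.mp hl with ⟨ha, ht⟩
    by_cases hac : a ≤ c
    · cases i with
      | zero => simp [hac]
      | succ i =>
        rw [List.getD_cons_succ, ih ht (by simpa using hi)]
        simp [hac]
    · have hgt : ∀ x ∈ a :: t, ¬ x ≤ c := by
        simp only [List.mem_cons, forall_eq_or_imp]
        exact ⟨hac, fun x hx hxc => hac ((ha x hx).trans hxc)⟩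
      rw [List.countP_eq_zero.mpr (by simpa using hgt), List.getD_eq_getElem _ _ hi]
      simpa using hgt _ (List.getElem_mem hi)

theorem List.countP_ofFn {α : Type*} {k : ℕ} (w : Fin k → α) (p : α → Bool) :
    (List.ofFn w).countP p = (Finset.univ.filter fun i => p (w i)).card := by
  induction k with
  | zero => simp
  | succ k ih =>
    rw [List.ofFn_succ, List.countP_cons, ih, Fin.univ_succ, Finset.filter_cons]
    split_ifs <;> simp [Finset.filter_map]

theorem measurable_medList_ofFn {k : ℕ} (d : ℝ) :
    Measurable fun w : Fin k → ℝ => medList d (List.ofFn w) := by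
  refine measurable_of_Iic fun c => ?_
  rcases Nat.eq_zero_or_pos k with rfl | hk
  · exact Set.Subsingleton.measurableSet fun _ _ _ _ => Subsingleton.elim _ _
  have hpre : (fun w : Fin k → ℝ => medList d (List.ofFn w)) ⁻¹' Set.Iic c
      = (fun w => ∑ i, if w i ≤ c then 1 else 0) ⁻¹' Set.Ioi ((k - 1) / 2) := by
    ext w
    simp only [Set.mem_preimage, Set.mem_Iic, Set.mem_Ioi, medList, ← Finset.card_filter]
    rw [(List.pairwise_mergeSort' (· ≤ ·) (List.ofFn w)).getD_le_iff_lt_countP (by simp; omega),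
      ((List.ofFn w).mergeSort_perm _).countP_eq, List.countP_ofFn]
    simp
  rw [hpre]
  exact measurableSet_preimage (Finset.measurable_sum _ fun i _ => Measurable.ite
    (measurableSet_le (measurable_pi_apply i) measurable_const) measurable_const measurable_const)
    .of_discrete

end Median

section Rank

open Finset Function

variable {ι κ : Type*} [Fintype ι] [LinearOrder κ] {key : ι → κ}

def numAbove (key : ι → κ) (a : ι) : ℕ := #{j | key a < key j}

theorem numAbove_lt_numAbove_of_lt {a b : ι} (h : key a < key b) :
    numAbove key b < numAbove key a :=
  card_lt_card <| ssubset_iff_of_subset (fun j hj => by simp_all [h.trans]) |>.2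
    ⟨b, by simp [h]⟩

theorem numAbove_injective (hkey : Injective key) : Injective (numAbove key) := fun a b hab => by
  rcases lt_trichotomy (key a) (key b) with h | h | h
  · exact absurd hab (numAbove_lt_numAbove_of_lt h).ne'
  · exact hkey h
  · exact absurd hab (numAbove_lt_numAbove_of_lt h).ne

theorem image_numAbove (hkey : Injective key) :
    univ.image (numAbove key) = range (Fintype.card ι) := by
  refine eq_of_subset_of_card_le (fun x hx => ?_)
    (by simp [card_image_of_injective _ (numAbove_injective hkey)])
  obtain ⟨a, -, rfl⟩ := mem_image.1 hx
  exact mem_range.2 <| (card_lt_card <| filter_ssubset.2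
    ⟨a, mem_univ a, lt_irrefl (key a)⟩).trans_eq card_univ

theorem card_filter_le_numAbove (hkey : Injective key) {r : ℕ} (hr : r ≤ Fintype.card ι) :
    #{a | Fintype.card ι - r ≤ numAbove key a} = r := by
  rw [← card_image_of_injective _ (numAbove_injective hkey), ← filter_image,
    image_numAbove hkey, range_eq_Ico, Ico_filter_le_of_left_le (Nat.zero_le _), Nat.card_Ico]
  omega

theorem numAbove_comp_perm (key : ι → κ) (σ : Equiv.Perm ι) (a : ι) :
    numAbove (key ∘ σ) a = numAbove key (σ a) :=
  card_equiv σ (by simp)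

end Rank

theorem measure_eq_div_card_of_card_filter_mem {α ι : Type*} [MeasurableSpace α] [Fintype ι]
    (ν : Measure α) [IsProbabilityMeasure ν] {E : ι → Set α} (hE : ∀ a, MeasurableSet (E a))
    (hsame : ∀ a b, ν (E a) = ν (E b)) {r : ℕ}
    (hcount : ∀ x, (Finset.univ.filter fun a => x ∈ E a).card = r) (a : ι) :
    ν (E a) = r / Fintype.card ι := by
  have hsum : ∑ b, ν (E b) = r := by
    simp_rw [← lintegral_indicator_one (hE _)]
    rw [← lintegral_finsetSum _ fun b _ => measurable_one.indicator (hE b)]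
    simp [Set.indicator_apply, Finset.sum_boole, hcount]
  have hne : (Fintype.card ι : ℝ≥0∞) ≠ 0 := by
    have : Nonempty ι := ⟨a⟩
    simp
  rw [ENNReal.eq_div_iff hne (ENNReal.natCast_ne_top _), ← hsum,
    Finset.sum_congr rfl fun b _ => hsame b a]
  simp

section RankEvent

open Finset Function

variable {m : ℕ}

-- `tieKey vp j < tieKey vp l` is the order `S_j ≺_π S_l`, for `vp = (S, π)`.
def tieKey (vp : (Fin m → ℝ) × Equiv.Perm (Fin m)) (j : Fin m) : ℝ ×ₗ Fin m :=
  toLex (vp.1 j, vp.2 j)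

theorem tieKey_injective (vp : (Fin m → ℝ) × Equiv.Perm (Fin m)) : Injective (tieKey vp) :=
  fun _ _ h => vp.2.injective (congrArg (fun x => (ofLex x).2) h)

-- The rank of `a` is `1 + numAbove (tieKey vp) a`, so this is the event `N < R`.
def rankEvent (N : ℕ) (a : Fin m) : Set ((Fin m → ℝ) × Equiv.Perm (Fin m)) :=
  {vp | N ≤ numAbove (tieKey vp) a}

def relabel (σ : Equiv.Perm (Fin m)) (vp : (Fin m → ℝ) × Equiv.Perm (Fin m)) :
    (Fin m → ℝ) × Equiv.Perm (Fin m) :=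
  (vp.1 ∘ σ, σ.trans vp.2)

theorem measurable_relabel (σ : Equiv.Perm (Fin m)) : Measurable (relabel σ) :=
  (measurable_pi_lambda _ fun j => (measurable_pi_apply (σ j)).comp measurable_fst).prodMk
    ((Measurable.of_discrete (f := (σ.trans ·))).comp measurable_snd)

theorem relabel_preimage_rankEvent (σ : Equiv.Perm (Fin m)) (N : ℕ) (a : Fin m) :
    relabel σ ⁻¹' rankEvent N a = rankEvent N (σ a) := by
  ext vp
  exact iff_of_eq (congrArg (N ≤ ·) (numAbove_comp_perm (tieKey vp) σ a))

theorem measurable_numAbove_tieKey (a : Fin m) :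
    Measurable fun vp : (Fin m → ℝ) × Equiv.Perm (Fin m) => numAbove (tieKey vp) a := by
  refine measurable_from_prod_countable_left fun p => ?_
  simp only [numAbove, card_filter]
  refine Finset.measurable_sum _ fun j _ => Measurable.ite ?_ measurable_const measurable_const
  simp only [tieKey, Prod.Lex.toLex_lt_toLex]
  exact (measurableSet_lt (measurable_pi_apply a) (measurable_pi_apply j)).union
    ((measurableSet_eq_fun (measurable_pi_apply a) (measurable_pi_apply j)).inter
      (MeasurableSet.const _))

theorem numAbove_tieKey (vp : (Fin m → ℝ) × Equiv.Perm (Fin m)) (a : Fin m) :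
    numAbove (tieKey vp) a
      = #{j | j ≠ a ∧ (vp.1 a < vp.1 j ∨ (vp.1 a = vp.1 j ∧ vp.2 a < vp.2 j))} := by
  refine congrArg card (filter_congr fun j _ => ?_)
  rw [tieKey, tieKey, Prod.Lex.toLex_lt_toLex]
  refine ⟨fun h => ⟨?_, h⟩, And.right⟩
  rintro rfl
  simp at h

theorem measurableSet_rankEvent (N : ℕ) (a : Fin m) : MeasurableSet (rankEvent N a) :=
  measurable_numAbove_tieKey a .of_discrete

theorem card_filter_mem_rankEvent {r : ℕ} (hr : r ≤ m) (vp : (Fin m → ℝ) × Equiv.Perm (Fin m)) :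
    #{a | vp ∈ rankEvent (m - r) a} = r := by
  simpa [rankEvent] using card_filter_le_numAbove (tieKey_injective vp) (r := r) (by simpa using hr)

theorem measure_rankEvent {r : ℕ} (hr : r ≤ m) (ν : Measure ((Fin m → ℝ) × Equiv.Perm (Fin m)))
    [IsProbabilityMeasure ν] (hν : ∀ σ, ν.map (relabel σ) = ν) (a : Fin m) :
    ν (rankEvent (m - r) a) = r / m := by
  have hsame : ∀ a b : Fin m, ν (rankEvent (m - r) a) = ν (rankEvent (m - r) b) := fun a b => by
    conv_lhs => rw [← hν (Equiv.swap a b)]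
    rw [Measure.map_apply (measurable_relabel _) (measurableSet_rankEvent _ _),
      relabel_preimage_rankEvent, Equiv.swap_apply_left]
  simpa using measure_eq_div_card_of_card_filter_mem ν (measurableSet_rankEvent _) hsame
    (card_filter_mem_rankEvent hr) a

end RankEvent

section Uniform

theorem uniformOn_univ_pi {ι Ω : Type*} [Fintype ι] [MeasurableSpace Ω]
    [MeasurableSingletonClass Ω] {f : ι → Set Ω} (hf : ∀ i, (f i).Finite) :
    uniformOn (Set.univ.pi f) = Measure.pi fun i => uniformOn (f i) := by
  refine (Measure.pi_eq fun t ht => ?_).symm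
  rw [← uniformOn_inter_self (Set.Finite.pi hf), ← Set.pi_inter_distrib,
    Finset.prod_congr rfl fun i _ => (uniformOn_inter_self (hf i)).symm]
  choose g hg using fun i => ((hf i).inter_of_left (t i)).exists_finset_coe
  simp only [← hg]
  lift f to ι → Finset Ω using hf
  simp [← Fintype.coe_piFinset, uniformOn_apply_finset, ← Fintype.piFinset_inter,
    ENNReal.prod_div_distrib_of_ne_top]

variable {α : Type*} [MeasurableSpace α]

theorem map_uniformOn_of_bijOn {h : α → α} (hh : Measurable h) {S : Set α}
    (hSm : MeasurableSet S) (hS : Set.BijOn h S S) : (uniformOn S).map h = uniformOn S := by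
  ext A hA
  rw [Measure.map_apply hh hA, uniformOn, cond_apply hSm, cond_apply hSm,
    Measure.count_apply (hSm.inter (hh hA)), Measure.count_apply (hSm.inter hA),
    ← (hS.injOn.mono Set.inter_subset_left).encard_image, Set.image_inter_preimage, hS.image_eq]

theorem map_equiv_eq_self_of_measure_singleton_eq [Countable α] [DiscreteMeasurableSpace α]
    {ρ : Measure α} {c : ℝ≥0∞} (hρ : ∀ q, ρ {q} = c) (e : α ≃ α) : ρ.map e = ρ :=
  Measure.ext_of_singleton fun q => by
    rw [Measure.map_apply .of_discrete .of_discrete, ← e.image_symm_eq_preimage,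
      Set.image_singleton, hρ, hρ]

variable [MeasurableSingletonClass α]

theorem uniformOn_singleton_eq_dirac (a : α) : uniformOn {a} = Measure.dirac a := by
  ext A hA
  simp [uniformOn_singleton, Measure.dirac_apply, Set.indicator]

theorem uniformOn_pair {a b : α} (hab : a ≠ b) :
    uniformOn {a, b} = (2⁻¹ : ℝ≥0∞) • Measure.dirac a + (2⁻¹ : ℝ≥0∞) • Measure.dirac b := by
  ext A hA
  rw [uniformOn, cond_apply (Set.toFinite _).measurableSet,
    Measure.count_apply (Set.toFinite _).measurableSet,
    Measure.count_apply ((Set.toFinite _).measurableSet.inter hA)]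
  by_cases ha : a ∈ A <;> by_cases hb : b ∈ A <;>
    simp [ha, hb, hab, Set.encard_pair, Set.insert_inter_of_mem, Set.insert_inter_of_notMem,
      Measure.dirac_apply' _ hA, ENNReal.inv_two_add_inv_two,
      ENNReal.inv_mul_cancel two_ne_zero ENNReal.ofNat_ne_top]

end Uniform

section Signs

variable {n m : ℕ} (z0 : Fin m)

def signValues (p : Fin n × Fin m) : Set ℝ := if p.2 = z0 then {1} else {1, -1}

def signMatrices : Set (Fin n × Fin m → ℝ) := Set.univ.pi (signValues z0)

theorem signValues_finite (p : Fin n × Fin m) : (signValues z0 p).Finite := by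
  unfold signValues; split <;> simp

theorem measurableSet_signMatrices : MeasurableSet (signMatrices (n := n) z0) :=
  (Set.Finite.pi (signValues_finite z0)).measurableSet

theorem ae_mem_signMatrices :
    ∀ᵐ s ∂uniformOn (signMatrices (n := n) z0), s ∈ signMatrices z0 := by
  rw [ae_iff]
  exact (uniformOn_eq_zero_iff (Set.Finite.pi (signValues_finite z0))).2 (Set.inter_compl_self _)

def relabelSigns (σ : Equiv.Perm (Fin m)) (s : Fin n × Fin m → ℝ) : Fin n × Fin m → ℝ :=
  fun p => s (p.1, σ p.2) * s (p.1, σ z0)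

variable {z0} {s : Fin n × Fin m → ℝ}

theorem eq_one_or_eq_neg_one_of_mem_signMatrices (hs : s ∈ signMatrices z0)
    (p : Fin n × Fin m) : s p = 1 ∨ s p = -1 := by
  have := hs p (Set.mem_univ p)
  unfold signValues at this
  split at this <;> simp_all

theorem apply_of_mem_signMatrices (hs : s ∈ signMatrices z0) (i : Fin n) : s (i, z0) = 1 := by
  simpa [signValues] using hs (i, z0) (Set.mem_univ _)

theorem mul_self_of_mem_signMatrices (hs : s ∈ signMatrices z0) (p : Fin n × Fin m) :
    s p * s p = 1 := by
  rcases eq_one_or_eq_neg_one_of_mem_signMatrices hs p with h | h <;> simp [h]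

theorem relabelSigns_mem (σ : Equiv.Perm (Fin m)) (hs : s ∈ signMatrices z0) :
    relabelSigns z0 σ s ∈ signMatrices z0 := by
  intro p _
  unfold signValues relabelSigns
  split_ifs with h
  · simp [h, mul_self_of_mem_signMatrices hs]
  · rcases eq_one_or_eq_neg_one_of_mem_signMatrices hs (p.1, σ p.2) with h1 | h1 <;>
    rcases eq_one_or_eq_neg_one_of_mem_signMatrices hs (p.1, σ z0) with h2 | h2 <;> simp [h1, h2]

theorem relabelSigns_symm_relabelSigns (σ : Equiv.Perm (Fin m)) (hs : s ∈ signMatrices z0) :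
    relabelSigns z0 σ.symm (relabelSigns z0 σ s) = s := by
  ext ⟨i, j⟩
  simp only [relabelSigns, Equiv.apply_symm_apply]
  linear_combination (s (i, j) * s (i, z0)) * mul_self_of_mem_signMatrices hs (i, σ z0)
    + s (i, j) * apply_of_mem_signMatrices hs i

theorem measurePreserving_relabelSigns (σ : Equiv.Perm (Fin m)) :
    MeasurePreserving (relabelSigns z0 σ) (uniformOn (signMatrices (n := n) z0))
      (uniformOn (signMatrices z0)) := by
  have hmeas : Measurable (relabelSigns (n := n) z0 σ) := by unfold relabelSigns; fun_prop
  refine ⟨hmeas, map_uniformOn_of_bijOn hmeas (measurableSet_signMatrices z0) ?_⟩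
  exact Set.InvOn.bijOn ⟨fun s hs => relabelSigns_symm_relabelSigns σ hs,
    fun s hs => by simpa using relabelSigns_symm_relabelSigns σ.symm hs⟩
    (fun s hs => relabelSigns_mem σ hs) (fun s hs => relabelSigns_mem σ.symm hs)

end Signs

section Exchangeability

theorem map_const_mul_of_map_neg {ξ : Measure ℝ} (hξ : ξ.map Neg.neg = ξ) {c : ℝ}
    (hc : c = 1 ∨ c = -1) : ξ.map (c * ·) = ξ := by
  rcases hc with rfl | rfl
  · simp
  · simpa [neg_one_mul] using hξ

variable {n m : ℕ} {ξ : Fin n → Measure ℝ} [∀ i, IsProbabilityMeasure (ξ i)]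

theorem map_pi_mul_of_map_neg (hξ : ∀ i, (ξ i).map Neg.neg = ξ i) {c : Fin n → ℝ}
    (hc : ∀ i, c i = 1 ∨ c i = -1) : (Measure.pi ξ).map (fun w i => c i * w i) = Measure.pi ξ := by
  rw [Measure.pi_map_pi fun i => (measurable_const_mul (c i)).aemeasurable]
  exact congrArg Measure.pi (funext fun i => map_const_mul_of_map_neg (hξ i) (hc i))

def signedData (w : Fin n → ℝ) (s : Fin n × Fin m → ℝ) : Fin n × Fin m → ℝ :=
  fun p => s p * w p.1

theorem measurable_signedData :
    Measurable fun x : (Fin n → ℝ) × (Fin n × Fin m → ℝ) => signedData x.1 x.2 := by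
  unfold signedData; fun_prop

/-- Multiplying row `i` by the sign `s (i, σ z0)` turns the signs `s ∘ σ` into
`relabelSigns z0 σ s`, which is again uniform on the sign matrices; the data absorb the extra
sign by symmetry. -/
theorem map_signedData_relabel (z0 : Fin m) (hξ : ∀ i, (ξ i).map Neg.neg = ξ i)
    (σ : Equiv.Perm (Fin m)) :
    ((Measure.pi ξ).prod (uniformOn (signMatrices z0))).map
        (fun x p => signedData x.1 x.2 (p.1, σ p.2))
      = ((Measure.pi ξ).prod (uniformOn (signMatrices z0))).map
        (fun x => signedData x.1 x.2) := by
  set ρ := uniformOn (signMatrices (n := n) z0)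
  set κ := Measure.pi ξ
  let T := fun x : (Fin n × Fin m → ℝ) × (Fin n → ℝ) =>
    (relabelSigns z0 σ x.1, fun i => x.1 (i, σ z0) * x.2 i)
  have hT : MeasurePreserving T (ρ.prod κ) (ρ.prod κ) :=
    (measurePreserving_relabelSigns σ).skew_product
      (g := fun s (w : Fin n → ℝ) i => s (i, σ z0) * w i) (by fun_prop) <| by
      filter_upwards [ae_mem_signMatrices z0] with s hs
      exact map_pi_mul_of_map_neg hξ fun i => eq_one_or_eq_neg_one_of_mem_signMatrices hs _
  have hTF : (fun x p => signedData x.2 x.1 (p.1, σ p.2)) =ᵐ[ρ.prod κ]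
      (fun x => signedData x.2 x.1) ∘ T := by
    filter_upwards [(measurePreserving_fst (μ := ρ) (ν := κ)).quasiMeasurePreserving.ae
      (ae_mem_signMatrices z0)] with x hx
    ext p
    simp only [signedData, relabelSigns, Function.comp_apply, T]
    linear_combination -(x.1 (p.1, σ p.2) * x.2 p.1) * mul_self_of_mem_signMatrices hx (p.1, σ z0)
  have hF : Measurable fun x : (Fin n × Fin m → ℝ) × (Fin n → ℝ) => signedData x.2 x.1 :=
    measurable_signedData.comp measurable_swap
  rw [← Measure.prod_swap, Measure.map_map (by unfold signedData; fun_prop) measurable_swap,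
    Measure.map_map measurable_signedData measurable_swap]
  change (ρ.prod κ).map (fun x p => signedData x.2 x.1 (p.1, σ p.2)) =
    (ρ.prod κ).map (fun x => signedData x.2 x.1)
  rw [Measure.map_congr hTF, ← Measure.map_map hF hT.measurable, hT.map_eq]

theorem map_columnStat_comp_perm (z0 : Fin m) (hξ : ∀ i, (ξ i).map Neg.neg = ξ i)
    {T : (Fin n → ℝ) → ℝ} (hT : Measurable T) (σ : Equiv.Perm (Fin m)) :
    (((Measure.pi ξ).prod (uniformOn (signMatrices z0))).map
        (fun x j => T fun i => signedData x.1 x.2 (i, j))).map (· ∘ σ)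
      = ((Measure.pi ξ).prod (uniformOn (signMatrices z0))).map
        (fun x j => T fun i => signedData x.1 x.2 (i, j)) := by
  have hC : Measurable fun (Y : Fin n × Fin m → ℝ) j => T fun i => Y (i, j) := by fun_prop
  have hS : Measurable fun (x : (Fin n → ℝ) × (Fin n × Fin m → ℝ)) j =>
      T fun i => signedData x.1 x.2 (i, j) := hC.comp measurable_signedData
  rw [Measure.map_map (by fun_prop) hS]
  change Measure.map ((fun (Y : Fin n × Fin m → ℝ) j => T fun i => Y (i, j)) ∘
    fun (x : (Fin n → ℝ) × (Fin n × Fin m → ℝ)) (p : Fin n × Fin m) =>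
      signedData x.1 x.2 (p.1, σ p.2)) _ = _
  rw [← Measure.map_map hC (by unfold signedData; fun_prop), map_signedData_relabel z0 hξ σ,
    Measure.map_map hC measurable_signedData]
  rfl

theorem map_relabel_prod {η : Measure (Fin m → ℝ)} [SFinite η]
    (hη : ∀ σ : Equiv.Perm (Fin m), η.map (· ∘ σ) = η) {ρ : Measure (Equiv.Perm (Fin m))}
    [SFinite ρ] {c : ℝ≥0∞} (hρ : ∀ q, ρ {q} = c) (σ : Equiv.Perm (Fin m)) :
    (η.prod ρ).map (relabel σ) = η.prod ρ := by
  rw [show relabel σ = Prod.map (· ∘ σ) (Equiv.mulRight σ) from rfl,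
    ← Measure.map_prod_map _ _ (by fun_prop) .of_discrete, hη σ,
    map_equiv_eq_self_of_measure_singleton_eq hρ]

end Exchangeability

theorem map_prodMk_prodMk_eq_prod {Ω α β γ : Type*} [MeasurableSpace Ω] [MeasurableSpace α]
    [MeasurableSpace β] [MeasurableSpace γ] {P : Measure Ω} [IsProbabilityMeasure P]
    {X : Ω → α} {Y : Ω → β} {Z : Ω → γ} (hX : Measurable X) (hY : Measurable Y)
    (hZ : Measurable Z) (hXYZ : IndepFun X (fun ω => (Y ω, Z ω)) P) (hYZ : IndepFun Y Z P) :
    P.map (fun ω => ((X ω, Y ω), Z ω)) = ((P.map X).prod (P.map Y)).prod (P.map Z) := by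
  have hassoc : P.map (fun ω => (X ω, (Y ω, Z ω)))
      = (P.map X).prod ((P.map Y).prod (P.map Z)) := by
    rw [← (indepFun_iff_map_prod_eq_prod_map_map hY.aemeasurable hZ.aemeasurable).1 hYZ]
    exact (indepFun_iff_map_prod_eq_prod_map_map hX.aemeasurable
      (hY.prodMk hZ).aemeasurable).1 hXYZ
  rw [← (measurePreserving_prodAssoc (P.map X) (P.map Y) (P.map Z)).symm.map_eq, ← hassoc,
    Measure.map_map MeasurableEquiv.prodAssoc.symm.measurable (hX.prodMk (hY.prodMk hZ))]
  rfl

theorem map_signs_eq_uniformOn {Ω : Type*} [MeasurableSpace Ω] {P : Measure Ω}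
    [IsProbabilityMeasure P] {n m : ℕ} (z0 : Fin m) {α : Fin n → Fin m → Ω → ℝ}
    (hαm : ∀ i j, Measurable (α i j)) (hα0 : ∀ i, α i z0 = fun _ => 1)
    (hrad : ∀ i j, j ≠ z0 → P.map (α i j)
      = (2⁻¹ : ℝ≥0∞) • Measure.dirac (1 : ℝ) + (2⁻¹ : ℝ≥0∞) • Measure.dirac (-1 : ℝ))
    (hαindep : iIndepFun (fun (p : Fin n × Fin m) ω => α p.1 p.2 ω) P) :
    P.map (fun ω p => α p.1 p.2 ω) = uniformOn (signMatrices z0) := by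
  refine ((iIndepFun_iff_map_fun_eq_pi_map fun p : Fin n × Fin m =>
    (hαm p.1 p.2).aemeasurable).1 hαindep).trans ?_
  rw [signMatrices, uniformOn_univ_pi (signValues_finite z0)]
  refine congrArg Measure.pi (funext fun ⟨i, j⟩ => ?_)
  by_cases hj : j = z0
  · subst hj
    simp [signValues, hα0, uniformOn_singleton_eq_dirac]
  · simp [signValues, hj, hrad i j hj, uniformOn_pair (show (1 : ℝ) ≠ -1 by norm_num)]

theorem map_columnStat_prodMk {Ω : Type*} [MeasurableSpace Ω] {P : Measure Ω}
    [IsProbabilityMeasure P] {n m : ℕ} {W : Ω → Fin n → ℝ} {A : Ω → Fin n × Fin m → ℝ}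
    {π : Ω → Equiv.Perm (Fin m)} (hWm : Measurable W) (hAm : Measurable A) (hπm : Measurable π)
    (hWindep : iIndepFun (fun i ω => W ω i) P) (hWAπ : IndepFun W (fun ω => (A ω, π ω)) P)
    (hAπ : IndepFun A π P) {T : (Fin n → ℝ) → ℝ} (hT : Measurable T) :
    P.map (fun ω => ((fun j => T fun i => signedData (W ω) (A ω) (i, j)), π ω))
      = (((Measure.pi fun i => P.map fun ω => W ω i).prod (P.map A)).map
          fun x j => T fun i => signedData x.1 x.2 (i, j)).prod (P.map π) := by
  have hstat : Measurable fun (x : (Fin n → ℝ) × (Fin n × Fin m → ℝ)) j =>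
      T fun i => signedData x.1 x.2 (i, j) := by
    unfold signedData
    fun_prop
  have hWim : ∀ i, Measurable fun ω => W ω i := fun i => (measurable_pi_apply i).comp hWm
  rw [← (iIndepFun_iff_map_fun_eq_pi_map fun i => (hWim i).aemeasurable).1 hWindep,
    ← Measure.map_id (μ := P.map π), Measure.map_prod_map _ _ hstat measurable_id,
    ← map_prodMk_prodMk_eq_prod hWm hAm hπm hWAπ hAπ,
    Measure.map_map (hstat.prodMap measurable_id) ((hWm.prodMk hAm).prodMk hπm)]
  rfl

theorem measure_rankEvent_signedData {Ω : Type*} [MeasurableSpace Ω] {P : Measure Ω}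
    [IsProbabilityMeasure P] {n m : ℕ} (z0 : Fin m) {W : Ω → Fin n → ℝ}
    {A : Ω → Fin n × Fin m → ℝ} {π : Ω → Equiv.Perm (Fin m)} (hWm : Measurable W)
    (hAm : Measurable A) (hπm : Measurable π) (hWindep : iIndepFun (fun i ω => W ω i) P)
    (hWsymm : ∀ i, P.map (fun ω => -W ω i) = P.map fun ω => W ω i)
    (hA : P.map A = uniformOn (signMatrices z0)) {c : ℝ≥0∞} (hπ : ∀ q, P {ω | π ω = q} = c)
    (hWAπ : IndepFun W (fun ω => (A ω, π ω)) P) (hAπ : IndepFun A π P)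
    {T : (Fin n → ℝ) → ℝ} (hT : Measurable T) {r : ℕ} (hr : r ≤ m) (a : Fin m) :
    P {ω | ((fun j => T fun i => signedData (W ω) (A ω) (i, j)), π ω) ∈ rankEvent (m - r) a}
      = r / m := by
  have hmeas : Measurable fun ω => ((fun j => T fun i => signedData (W ω) (A ω) (i, j)), π ω) := by
    unfold signedData
    fun_prop
  have hWim : ∀ i, Measurable fun ω => W ω i := fun i => (measurable_pi_apply i).comp hWm
  have : ∀ i, IsProbabilityMeasure (P.map fun ω => W ω i) := fun i =>
    Measure.isProbabilityMeasure_map (hWim i).aemeasurable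
  have : IsProbabilityMeasure (P.map fun ω =>
      ((fun j => T fun i => signedData (W ω) (A ω) (i, j)), π ω)) :=
    Measure.isProbabilityMeasure_map hmeas.aemeasurable
  have hsymm : ∀ i, (P.map fun ω => W ω i).map Neg.neg = P.map fun ω => W ω i := fun i => by
    rw [Measure.map_map measurable_neg (hWim i), ← hWsymm i]
    rfl
  have hπ' : ∀ q, P.map π {q} = c := fun q => by
    rw [Measure.map_apply hπm (measurableSet_singleton q)]
    exact hπ q
  change P ((fun ω => ((fun j => T fun i => signedData (W ω) (A ω) (i, j)), π ω)) ⁻¹'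
    rankEvent (m - r) a) = _
  rw [← Measure.map_apply hmeas (measurableSet_rankEvent _ _)]
  refine measure_rankEvent hr _ (fun σ => ?_) a
  rw [map_columnStat_prodMk hWm hAm hπm hWindep hWAπ hAπ hT, hA]
  exact map_relabel_prod (map_columnStat_comp_perm z0 hsymm hT) hπ' σ

theorem stmt15_general {Ω : Type*} [MeasurableSpace Ω] (P : Measure Ω) [IsProbabilityMeasure P]
    (n m k r : ℕ) (hm : 0 < m) (hrm : r ≤ m)
    (μ : ℝ)
    (X : Fin n → Ω → ℝ) (hXm : ∀ i, Measurable (X i))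
    (hXindep : iIndepFun X P)
    (hsym : ∀ i, Measure.map (fun ω => X i ω - μ) P
      = Measure.map (fun ω => μ - X i ω) P)
    (α : Fin n → Fin m → Ω → ℝ) (hαm : ∀ i j, Measurable (α i j))
    (hα0 : ∀ i, α i ⟨0, hm⟩ = fun _ => 1)
    (hrad : ∀ i j, j ≠ ⟨0, hm⟩ → Measure.map (α i j) P
      = (2⁻¹ : ℝ≥0∞) • Measure.dirac (1 : ℝ) + (2⁻¹ : ℝ≥0∞) • Measure.dirac (-1 : ℝ))
    (hαindep : iIndepFun
      (fun (p : Fin n × Fin m) ω => α p.1 p.2 ω) P)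
    (π : Ω → Equiv.Perm (Fin m)) (hπm : Measurable π)
    (hπunif : ∀ σ : Equiv.Perm (Fin m),
      P {ω | π ω = σ} = (Fintype.card (Equiv.Perm (Fin m)) : ℝ≥0∞)⁻¹)
    (hindep1 : IndepFun (fun ω (i : Fin n) => X i ω)
      (fun ω => ((fun p : Fin n × Fin m => α p.1 p.2 ω), π ω)) P)
    (hindep2 : IndepFun (fun ω (p : Fin n × Fin m) => α p.1 p.2 ω) π P)
    (B : Fin k → Finset (Fin n)) :
    let S : Fin m → Ω → ℝ := fun j ω =>
      medList 0 (List.ofFn fun ℓ =>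
        ((B ℓ).card : ℝ)⁻¹ * ∑ i ∈ B ℓ, α i j ω * (X i ω - μ))
    let prec : Ω → Fin m → Fin m → Prop := fun ω j l =>
      S j ω < S l ω ∨ (S j ω = S l ω ∧ π ω j < π ω l)
    let R : Ω → ℕ := fun ω =>
      1 + (Finset.univ.filter fun j : Fin m => j ≠ ⟨0, hm⟩ ∧ prec ω ⟨0, hm⟩ j).card
    P {ω | m - r < R ω} = (r : ℝ≥0∞) / (m : ℝ≥0∞) := by
  intro S prec R
  set z0 : Fin m := ⟨0, hm⟩
  let W : Ω → Fin n → ℝ := fun ω i => X i ω - μ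
  let A : Ω → Fin n × Fin m → ℝ := fun ω p => α p.1 p.2 ω
  let mom : (Fin n → ℝ) → ℝ := fun c =>
    medList 0 (List.ofFn fun ℓ => ((B ℓ).card : ℝ)⁻¹ * ∑ i ∈ B ℓ, c i)
  have hevent : {ω | m - r < R ω} = {ω | ((fun j => mom fun i => signedData (W ω) (A ω) (i, j)),
      π ω) ∈ rankEvent (m - r) z0} := by
    ext ω
    simp only [Set.mem_ofPred_eq, rankEvent, numAbove_tieKey]
    exact Nat.lt_one_add_iff
  have hWAπ : IndepFun W (fun ω => (A ω, π ω)) P :=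
    hindep1.comp (φ := fun x i => x i - μ) (by fun_prop) measurable_id
  have hmom : Measurable mom := (measurable_medList_ofFn 0).comp (by fun_prop)
  rw [hevent]
  exact measure_rankEvent_signedData z0 (measurable_pi_lambda _ fun i => (hXm i).sub_const μ)
    (measurable_pi_lambda _ fun p => hαm p.1 p.2) hπm
    (hXindep.comp _ fun i => measurable_sub_const μ)
    (fun i => by simpa only [W, neg_sub] using (hsym i).symm)
    (map_signs_eq_uniformOn z0 hαm hα0 hrad hαindep) hπunif hWAπ hindep2
    hmom hrm z0

/-- Exact coverage of the one-sided RMM test: under i.i.d. sampling from a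
distribution symmetric about `μ`, the rank `R(μ)` of the original MoM statistic among
the `m` sign-randomized MoM statistics (with random tie-breaking) exceeds `m - r`
with probability exactly `r/m`.  The sign column `j = 0` is constantly `1`, so that
`S 0` is the statistic of the original sample. -/
theorem stmt15 {Ω : Type*} [MeasurableSpace Ω] (P : Measure Ω) [IsProbabilityMeasure P]
    (n m k r : ℕ) (hm : 0 < m) (hr : 1 ≤ r) (hrm : r ≤ m) (hk : 0 < k)
    (μ : ℝ)
    (X : Fin n → Ω → ℝ) (hXm : ∀ i, Measurable (X i))
    (hXindep : iIndepFun X P)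
    (hXid : ∀ i j, Measure.map (X i) P = Measure.map (X j) P)
    (hsym : ∀ i, Measure.map (fun ω => X i ω - μ) P
      = Measure.map (fun ω => μ - X i ω) P)
    (α : Fin n → Fin m → Ω → ℝ) (hαm : ∀ i j, Measurable (α i j))
    (hα0 : ∀ i, α i ⟨0, hm⟩ = fun _ => 1)
    (hrad : ∀ i j, j ≠ ⟨0, hm⟩ → Measure.map (α i j) P
      = (2⁻¹ : ℝ≥0∞) • Measure.dirac (1 : ℝ) + (2⁻¹ : ℝ≥0∞) • Measure.dirac (-1 : ℝ))
    (hαindep : iIndepFun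
      (fun (p : Fin n × Fin m) ω => α p.1 p.2 ω) P)
    (π : Ω → Equiv.Perm (Fin m)) (hπm : Measurable π)
    (hπunif : ∀ σ : Equiv.Perm (Fin m),
      P {ω | π ω = σ} = (Fintype.card (Equiv.Perm (Fin m)) : ℝ≥0∞)⁻¹)
    (hindep1 : IndepFun (fun ω (i : Fin n) => X i ω)
      (fun ω => ((fun p : Fin n × Fin m => α p.1 p.2 ω), π ω)) P)
    (hindep2 : IndepFun (fun ω (p : Fin n × Fin m) => α p.1 p.2 ω) π P)
    (B : Fin k → Finset (Fin n)) (hBne : ∀ ℓ, (B ℓ).Nonempty)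
    (hdisj : ∀ ℓ ℓ', ℓ ≠ ℓ' → Disjoint (B ℓ) (B ℓ')) :
    let S : Fin m → Ω → ℝ := fun j ω =>
      medList 0 (List.ofFn fun ℓ =>
        ((B ℓ).card : ℝ)⁻¹ * ∑ i ∈ B ℓ, α i j ω * (X i ω - μ))
    let prec : Ω → Fin m → Fin m → Prop := fun ω j l =>
      S j ω < S l ω ∨ (S j ω = S l ω ∧ π ω j < π ω l)
    let R : Ω → ℕ := fun ω =>
      1 + (Finset.univ.filter fun j : Fin m => j ≠ ⟨0, hm⟩ ∧ prec ω ⟨0, hm⟩ j).card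
    P {ω | m - r < R ω} = (r : ℝ≥0∞) / (m : ℝ≥0∞) :=
  stmt15_general P n m k r hm hrm μ X hXm hXindep hsym α hαm hα0 hrad hαindep π hπm hπunif hindep1
    hindep2 B
end
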